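/- The contextuality scenario generated by all n-qubit product rays is KS-colourable: the map cₙ defined on product unit vectors of (ℂ²)^{⊗n} by cₙ(ψ) = 1 if ψ is all-north and cₙ(ψ) = 0 otherwise is a KS-colouring of the set of all product unit vectors, i.e., every orthonormal basis of (ℂ²)^{⊗n} consisting of product vectors contains exactly one vector with cₙ-value 1, and no two mutually orthogonal product unit vectors both have cₙ-value 1. -/

import Mathlib

open scoped InnerProductSpace
open MeasureTheory

noncomputable section

abbrev Qubit : Type := EuclideanSpace ℂ (Fin 2)
abbrev NQubit (n : ℕ) : Type := EuclideanSpace ℂ (Fin n → Fin 2)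

/-- The product vector `ψ₁ ⊗ ⋯ ⊗ ψₙ` in `(ℂ²)^{⊗n}`, modelled concretely as
`EuclideanSpace ℂ (Fin n → Fin 2)`; its inner products satisfy
`⟨tens ψ, tens χ⟩ = ∏ j, ⟨ψ j, χ j⟩`. -/
noncomputable def tens {n : ℕ} (ψ : Fin n → Qubit) : NQubit n :=
  WithLp.toLp 2 (fun f : Fin n → Fin 2 => ∏ j, ψ j (f j))

/-- A vector of `(ℂ²)^{⊗n}` is a product vector if it is of the form `ψ₁ ⊗ ⋯ ⊗ ψₙ`. -/
def IsProduct {n : ℕ} (v : NQubit n) : Prop := ∃ ψ : Fin n → Qubit, v = tens ψ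

/-- A finite set of vectors forming an orthonormal basis of `H`. -/
def IsONBasis {H : Type*} [NormedAddCommGroup H] [InnerProductSpace ℂ H]
    (B : Finset H) : Prop :=
  Orthonormal ℂ (fun v : B => (v : H)) ∧ Submodule.span ℂ (B : Set H) = ⊤

/-- A KS-colouring of a set `S` of unit vectors: a `{0,1}`-valued map (modelled as a
predicate, `c v` meaning value `1`) such that every orthonormal basis contained in `S`
has exactly one element of value `1`, and no two mutually orthogonal elements of `S`
both have value `1`. -/
def IsKSColouring {H : Type*} [NormedAddCommGroup H] [InnerProductSpace ℂ H]
    (S : Set H) (c : H → Prop) : Prop :=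
  (∀ B : Finset H, ↑B ⊆ S → IsONBasis B → ∃! v, v ∈ B ∧ c v) ∧
  (∀ ψ ∈ S, ∀ χ ∈ S, ⟪ψ, χ⟫_ℂ = 0 → ¬(c ψ ∧ c χ))

/-- First coordinate of the Bloch vector of a qubit vector. -/
def blochX (ψ : Qubit) : ℝ := 2 * ((starRingEnd ℂ) (ψ 0) * ψ 1).re
/-- Second coordinate of the Bloch vector of a qubit vector. -/
def blochY (ψ : Qubit) : ℝ := 2 * ((starRingEnd ℂ) (ψ 0) * ψ 1).im
/-- Third coordinate of the Bloch vector of a qubit vector. -/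
def blochZ (ψ : Qubit) : ℝ := Complex.normSq (ψ 0) - Complex.normSq (ψ 1)

/-- A qubit unit vector is north if its Bloch vector `(x,y,z)` satisfies `z > 0`, or
`z = 0 ∧ y < 0`, or `z = 0 ∧ y = 0 ∧ x > 0`. -/
def IsNorth (ψ : Qubit) : Prop :=
  0 < blochZ ψ ∨ (blochZ ψ = 0 ∧ blochY ψ < 0) ∨
    (blochZ ψ = 0 ∧ blochY ψ = 0 ∧ 0 < blochX ψ)

/-- An `n`-qubit product vector is all-north if it factors as a product of north
qubit vectors. -/
def AllNorth {n : ℕ} (v : NQubit n) : Prop :=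
  ∃ ψ : Fin n → Qubit, v = tens ψ ∧ ∀ j, IsNorth (ψ j)

/-! Orthogonal nonzero qubit vectors have Bloch vectors pointing in opposite directions, and
northness is positivity of the Bloch vector in a lexicographic order, so of two orthogonal
nonzero qubit vectors exactly one is north. Orthogonal product vectors have orthogonal factors
in some position, so they are never both all-north; this gives uniqueness. For existence, split
an orthonormal product basis of `n + 1` qubits according to whether the last factor is north:
inside each part the last factors are pairwise non-orthogonal, so dropping them leaves an
orthonormal family of `n`-qubit product vectors. Each part therefore has at most `2 ^ n`
elements, hence exactly `2 ^ n`, and induction applies to the north part. -/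

open scoped ComplexConjugate

lemma inner_qubit_eq (ψ χ : Qubit) :
    ⟪ψ, χ⟫_ℂ = conj (ψ 0) * χ 0 + conj (ψ 1) * χ 1 := by
  simp [PiLp.inner_apply, Fin.sum_univ_two, mul_comm]

lemma normSq_add_normSq_eq_norm_sq (ψ : Qubit) :
    Complex.normSq (ψ 0) + Complex.normSq (ψ 1) = ‖ψ‖ ^ 2 := by
  simp [EuclideanSpace.norm_sq_eq, Fin.sum_univ_two, Complex.normSq_eq_norm_sq]

lemma bloch_sq_sum (ψ : Qubit) :
    blochX ψ ^ 2 + blochY ψ ^ 2 + blochZ ψ ^ 2 = (‖ψ‖ ^ 2) ^ 2 := by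
  rw [← normSq_add_normSq_eq_norm_sq]
  simp only [blochX, blochY, blochZ, Complex.normSq_apply, Complex.mul_re, Complex.mul_im,
    Complex.conj_re, Complex.conj_im]
  ring

lemma bloch_antipodal {ψ χ : Qubit} (h : ⟪ψ, χ⟫_ℂ = 0) :
    ‖ψ‖ ^ 2 * blochX χ = -(‖χ‖ ^ 2 * blochX ψ) ∧
    ‖ψ‖ ^ 2 * blochY χ = -(‖χ‖ ^ 2 * blochY ψ) ∧
    ‖ψ‖ ^ 2 * blochZ χ = -(‖χ‖ ^ 2 * blochZ ψ) := by
  rw [inner_qubit_eq] at h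
  have h' : ψ 0 * conj (χ 0) + ψ 1 * conj (χ 1) = 0 := by
    simpa using congrArg conj h
  have hmul : Complex.normSq (ψ 0) * Complex.normSq (χ 0)
      = Complex.normSq (ψ 1) * Complex.normSq (χ 1) := by
    simpa [Complex.normSq_mul] using congrArg Complex.normSq (eq_neg_of_add_eq_zero_left h)
  have hxy : ((‖ψ‖ ^ 2 : ℝ) : ℂ) * (conj (χ 0) * χ 1)
      = -(((‖χ‖ ^ 2 : ℝ) : ℂ) * (conj (ψ 0) * ψ 1)) := by
    simp only [← normSq_add_normSq_eq_norm_sq, Complex.ofReal_add, ← Complex.mul_conj]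
    linear_combination (conj (χ 0) * ψ 1) * h + (conj (ψ 0) * χ 1) * h'
  refine ⟨?_, ?_, ?_⟩
  · have hre := congrArg Complex.re hxy
    rw [Complex.re_ofReal_mul, Complex.neg_re, Complex.re_ofReal_mul] at hre
    simp only [blochX]
    linear_combination 2 * hre
  · have him := congrArg Complex.im hxy
    rw [Complex.im_ofReal_mul, Complex.neg_im, Complex.im_ofReal_mul] at him
    simp only [blochY]
    linear_combination 2 * him
  · simp only [blochZ, ← normSq_add_normSq_eq_norm_sq]
    linear_combination 2 * hmul

lemma sign_iff_of_mul_eq_neg_mul {p q a a' : ℝ} (hp : 0 < p) (hq : 0 < q)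
    (h : p * a' = -(q * a)) : (0 < a' ↔ a < 0) ∧ (a' = 0 ↔ a = 0) ∧ (a' < 0 ↔ 0 < a) := by
  refine ⟨⟨?_, ?_⟩, ⟨?_, ?_⟩, ⟨?_, ?_⟩⟩ <;> intro h' <;> nlinarith

lemma lex_neg_iff_not_lex_pos {x y z : ℝ} (h : ¬(x = 0 ∧ y = 0 ∧ z = 0)) :
    (z < 0 ∨ (z = 0 ∧ 0 < y) ∨ (z = 0 ∧ y = 0 ∧ x < 0)) ↔
      ¬(0 < z ∨ (z = 0 ∧ y < 0) ∨ (z = 0 ∧ y = 0 ∧ 0 < x)) := by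
  rcases lt_trichotomy z 0 with hz | rfl | hz
  · simp [hz, hz.not_gt, hz.ne]
  · rcases lt_trichotomy y 0 with hy | rfl | hy
    · simp [hy, hy.not_gt, hy.ne]
    · rcases lt_trichotomy x 0 with hx | rfl | hx
      · simp [hx, hx.not_gt]
      · simp at h
      · simp [hx, hx.not_gt]
    · simp [hy, hy.not_gt, hy.ne']
  · simp [hz, hz.not_gt, hz.ne']

lemma bloch_ne_zero {ψ : Qubit} (hψ : ψ ≠ 0) :
    ¬(blochX ψ = 0 ∧ blochY ψ = 0 ∧ blochZ ψ = 0) := by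
  rintro ⟨hx, hy, hz⟩
  have h := bloch_sq_sum ψ
  rw [hx, hy, hz] at h
  exact hψ (by simpa using h.symm)

lemma isNorth_iff_not_isNorth_of_inner_eq_zero {ψ χ : Qubit} (hψ : ψ ≠ 0) (hχ : χ ≠ 0)
    (h : ⟪ψ, χ⟫_ℂ = 0) : IsNorth χ ↔ ¬IsNorth ψ := by
  have hp : 0 < ‖ψ‖ ^ 2 := by positivity
  have hq : 0 < ‖χ‖ ^ 2 := by positivity
  obtain ⟨hX, hY, hZ⟩ := bloch_antipodal h
  obtain ⟨hxp, hx0, -⟩ := sign_iff_of_mul_eq_neg_mul hp hq hX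
  obtain ⟨-, hy0, hyn⟩ := sign_iff_of_mul_eq_neg_mul hp hq hY
  obtain ⟨hzp, hz0, -⟩ := sign_iff_of_mul_eq_neg_mul hp hq hZ
  unfold IsNorth
  rw [hzp, hz0, hyn, hy0, hxp]
  exact lex_neg_iff_not_lex_pos (bloch_ne_zero hψ)

lemma IsNorth.ne_zero {ψ : Qubit} (h : IsNorth ψ) : ψ ≠ 0 := by
  rintro rfl
  simp [IsNorth, blochX, blochY, blochZ] at h

lemma inner_ne_zero_of_isNorth_iff {ψ χ : Qubit} (hψ : ψ ≠ 0) (hχ : χ ≠ 0)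
    (h : IsNorth ψ ↔ IsNorth χ) : ⟪ψ, χ⟫_ℂ ≠ 0 := fun h0 => by
  have := isNorth_iff_not_isNorth_of_inner_eq_zero hψ hχ h0
  tauto

lemma inner_tens {n : ℕ} (ψ χ : Fin n → Qubit) :
    ⟪tens ψ, tens χ⟫_ℂ = ∏ j, ⟪ψ j, χ j⟫_ℂ := by
  simp only [PiLp.inner_apply, RCLike.inner_apply, tens]
  rw [Finset.prod_univ_sum, ← Fintype.piFinset_univ]
  exact Finset.sum_congr rfl fun f _ => by rw [map_prod, ← Finset.prod_mul_distrib]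

lemma inner_tens_succ {n : ℕ} (ψ χ : Fin (n + 1) → Qubit) :
    ⟪tens ψ, tens χ⟫_ℂ =
      ⟪tens (Fin.init ψ), tens (Fin.init χ)⟫_ℂ * ⟪ψ (Fin.last n), χ (Fin.last n)⟫_ℂ := by
  rw [inner_tens, inner_tens, Fin.prod_univ_castSucc]
  rfl

lemma norm_tens {n : ℕ} (ψ : Fin n → Qubit) : ‖tens ψ‖ = ∏ j, ‖ψ j‖ := by
  have h := inner_tens ψ ψ
  simp only [inner_self_eq_norm_sq_to_K] at h
  norm_cast at h
  rw [Finset.prod_pow] at h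
  exact (pow_left_inj₀ (norm_nonneg _) (Finset.prod_nonneg fun j _ => norm_nonneg _)
    two_ne_zero).mp h

lemma tens_smul {n : ℕ} (c : Fin n → ℂ) (ψ : Fin n → Qubit) :
    tens (fun j => c j • ψ j) = (∏ j, c j) • tens ψ := by
  ext f
  simp only [tens, PiLp.smul_apply, smul_eq_mul, PiLp.toLp_apply, Finset.prod_mul_distrib]

lemma IsProduct.exists_unit_factors {n : ℕ} {v : NQubit n} (hv : IsProduct v) (h1 : ‖v‖ = 1) :
    ∃ ψ : Fin n → Qubit, v = tens ψ ∧ ∀ j, ‖ψ j‖ = 1 := by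
  obtain ⟨χ, rfl⟩ := hv
  have hχ : ∀ j, χ j ≠ 0 := fun j hj => by
    rw [norm_tens, Finset.prod_eq_zero (Finset.mem_univ j) (by simp [hj])] at h1
    exact zero_ne_one h1
  refine ⟨fun j => ((‖χ j‖ : ℂ))⁻¹ • χ j, ?_, fun j => norm_smul_inv_norm (hχ j)⟩
  have hprod : ∏ j, ((‖χ j‖ : ℂ))⁻¹ = 1 := by
    rw [Finset.prod_inv_distrib, inv_eq_one]
    exact_mod_cast (norm_tens χ).symm.trans h1
  rw [tens_smul, hprod, one_smul]

lemma AllNorth.inner_ne_zero {n : ℕ} {u v : NQubit n} (hu : AllNorth u) (hv : AllNorth v) :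
    ⟪u, v⟫_ℂ ≠ 0 := by
  obtain ⟨ψ, rfl, hψ⟩ := hu
  obtain ⟨χ, rfl, hχ⟩ := hv
  rw [inner_tens]
  exact Finset.prod_ne_zero_iff.mpr fun j _ =>
    inner_ne_zero_of_isNorth_iff (hψ j).ne_zero (hχ j).ne_zero (iff_of_true (hψ j) (hχ j))

lemma card_le_two_pow_of_pairwise_inner_tens_eq_zero {n : ℕ} {ι : Type*} [Fintype ι]
    {F : ι → Fin n → Qubit} (hunit : ∀ i j, ‖F i j‖ = 1)
    (horth : Pairwise fun i i' => ⟪tens (F i), tens (F i')⟫_ℂ = 0) :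
    Fintype.card ι ≤ 2 ^ n := by
  have hON : Orthonormal ℂ fun i => tens (F i) := ⟨fun i => by simp [norm_tens, hunit], horth⟩
  simpa [finrank_euclideanSpace] using hON.linearIndependent.fintype_card_le_finrank

lemma pairwise_inner_tens_init_eq_zero {n : ℕ} {ι : Type*} {F : ι → Fin (n + 1) → Qubit}
    (hne : ∀ i, F i (Fin.last n) ≠ 0)
    (horth : Pairwise fun i i' => ⟪tens (F i), tens (F i')⟫_ℂ = 0)
    (hsame : ∀ i i', IsNorth (F i (Fin.last n)) ↔ IsNorth (F i' (Fin.last n))) :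
    Pairwise fun i i' => ⟪tens (Fin.init (F i)), tens (Fin.init (F i'))⟫_ℂ = 0 := by
  intro i i' hii'
  have h : ⟪tens (F i), tens (F i')⟫_ℂ = 0 := horth hii'
  rw [inner_tens_succ] at h
  exact (mul_eq_zero.mp h).resolve_right
    (inner_ne_zero_of_isNorth_iff (hne i) (hne i') (hsame i i'))

theorem exists_forall_isNorth_of_card_eq (n : ℕ) {ι : Type*} [Fintype ι]
    (F : ι → Fin n → Qubit) (hunit : ∀ i j, ‖F i j‖ = 1)
    (horth : Pairwise fun i i' => ⟪tens (F i), tens (F i')⟫_ℂ = 0)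
    (hcard : Fintype.card ι = 2 ^ n) : ∃ i, ∀ j, IsNorth (F i j) := by
  induction n generalizing ι with
  | zero =>
    have : Nonempty ι := Fintype.card_pos_iff.mp (by simp [hcard])
    exact ⟨Classical.arbitrary ι, fun j => j.elim0⟩
  | succ n ih =>
    classical
    have hne : ∀ i, F i (Fin.last n) ≠ 0 := fun i => norm_ne_zero_iff.mp (by simp [hunit])
    have hNorth : Pairwise fun i i' : {i // IsNorth (F i (Fin.last n))} =>
        ⟪tens (Fin.init (F i)), tens (Fin.init (F i'))⟫_ℂ = 0 :=
      pairwise_inner_tens_init_eq_zero (fun i => hne i)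
        (horth.comp_of_injective Subtype.val_injective) fun i i' => iff_of_true i.2 i'.2
    have hSouth : Pairwise fun i i' : {i // ¬IsNorth (F i (Fin.last n))} =>
        ⟪tens (Fin.init (F i)), tens (Fin.init (F i'))⟫_ℂ = 0 :=
      pairwise_inner_tens_init_eq_zero (fun i => hne i)
        (horth.comp_of_injective Subtype.val_injective) fun i i' => iff_of_false i.2 i'.2
    have hle := card_le_two_pow_of_pairwise_inner_tens_eq_zero (fun _ _ => hunit _ _) hNorth
    have hle' := card_le_two_pow_of_pairwise_inner_tens_eq_zero (fun _ _ => hunit _ _) hSouth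
    rw [Fintype.card_subtype_compl, hcard] at hle'
    have hcardNorth : Fintype.card {i // IsNorth (F i (Fin.last n))} = 2 ^ n := by
      rw [pow_succ] at hle'
      omega
    obtain ⟨⟨i, hi⟩, hinit⟩ := ih _ (fun _ _ => hunit _ _) hNorth hcardNorth
    exact ⟨i, Fin.lastCases hi hinit⟩

lemma IsONBasis.card_eq_finrank {H : Type*} [NormedAddCommGroup H] [InnerProductSpace ℂ H]
    {B : Finset H} (hB : IsONBasis B) : B.card = Module.finrank ℂ H := by
  rw [← finrank_span_finset_eq_card hB.1.linearIndependent, hB.2, finrank_top]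

lemma isKSColouring_of_exists {H : Type*} [NormedAddCommGroup H] [InnerProductSpace ℂ H]
    {S : Set H} {c : H → Prop}
    (hex : ∀ B : Finset H, ↑B ⊆ S → IsONBasis B → ∃ v ∈ B, c v)
    (horth : ∀ ψ ∈ S, ∀ χ ∈ S, ⟪ψ, χ⟫_ℂ = 0 → ¬(c ψ ∧ c χ)) : IsKSColouring S c := by
  refine ⟨fun B hBS hB => ?_, horth⟩
  obtain ⟨v, hvB, hv⟩ := hex B hBS hB
  refine ⟨v, ⟨hvB, hv⟩, fun w ⟨hwB, hw⟩ => ?_⟩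
  by_contra hwv
  exact horth w (hBS hwB) v (hBS hvB)
    (hB.1.2 (show (⟨w, hwB⟩ : B) ≠ ⟨v, hvB⟩ from fun h => hwv (congrArg Subtype.val h)))
    ⟨hw, hv⟩

/-- the map assigning value `1` exactly to all-north product unit vectors is
a KS-colouring of the set of all product unit vectors of `(ℂ²)^{⊗n}`: every orthonormal
basis consisting of product vectors contains exactly one all-north vector, and no two
mutually orthogonal product unit vectors are both all-north. -/
theorem allNorth_isKSColouring_of_product_rays (n : ℕ) :
    IsKSColouring {v : NQubit n | IsProduct v ∧ ‖v‖ = 1} (fun v => AllNorth v) := by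
  refine isKSColouring_of_exists (fun B hBS hB => ?_)
    fun u _ v _ huv hN => hN.1.inner_ne_zero hN.2 huv
  choose F hF using fun v : B => (hBS v.2).1.exists_unit_factors (hBS v.2).2
  have horth : Pairwise fun v w : B => ⟪tens (F v), tens (F w)⟫_ℂ = 0 := fun v w hvw => by
    show ⟪tens (F v), tens (F w)⟫_ℂ = 0
    rw [← (hF v).1, ← (hF w).1]
    exact hB.1.2 hvw
  have hcard : Fintype.card B = 2 ^ n := by
    rw [Fintype.card_coe, hB.card_eq_finrank, finrank_euclideanSpace]
    simp
  obtain ⟨v, hv⟩ := exists_forall_isNorth_of_card_eq n F (fun v => (hF v).2) horth hcard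
  exact ⟨v, v.2, F v, (hF v).1, hv⟩
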